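/- The Bol algebra structure 𝔅₁₀ on ℂ⁴, given by [e₁,e₂]=e₃, [e₁,e₃]=e₄, [e₁,e₂,e₁]=e₃, [e₁,e₂,e₃]=e₄, [e₁,e₃,e₂]=e₄, degenerates to the structure 𝔅₀₉ given by [e₁,e₂]=e₃, [e₁,e₂,e₁]=e₃, [e₁,e₂,e₃]=e₄, [e₁,e₃,e₂]=e₄. -/
import Mathlib


open Filter Matrix Topology

/-- ℂ⁴ -/
abbrev V4 : Type := Fin 4 → ℂ

/-- GL₄(ℂ) -/
abbrev GL4 := Matrix.GeneralLinearGroup (Fin 4) ℂ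

/-- structure constants of a bilinear map on ℂ⁴: `μ i j` is the value on `(eᵢ, eⱼ)`. -/
abbrev Bil4 := Fin 4 → Fin 4 → V4

/-- structure constants of a trilinear map on ℂ⁴. -/
abbrev Tril4 := Fin 4 → Fin 4 → Fin 4 → V4

/-- standard basis vectors -/
noncomputable def e4 (k : Fin 4) : V4 := Pi.single k (1 : ℂ)

/-- action of `g ∈ GL₄(ℂ)` on a bilinear map: `(g·μ)(x,y) = g μ(g⁻¹x, g⁻¹y)`,
in structure constants. -/
noncomputable def actBil (g : GL4) (μ : Bil4) : Bil4 := fun i j =>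
  (g : Matrix (Fin 4) (Fin 4) ℂ).mulVec
    (∑ p, ∑ q,
      (((g⁻¹ : GL4) : Matrix (Fin 4) (Fin 4) ℂ) p i *
       ((g⁻¹ : GL4) : Matrix (Fin 4) (Fin 4) ℂ) q j) • μ p q)

/-- action of `g ∈ GL₄(ℂ)` on a trilinear map:
`(g·τ)(x,y,z) = g τ(g⁻¹x, g⁻¹y, g⁻¹z)`, in structure constants. -/
noncomputable def actTril (g : GL4) (τ : Tril4) : Tril4 := fun i j k =>
  (g : Matrix (Fin 4) (Fin 4) ℂ).mulVec
    (∑ p, ∑ q, ∑ r,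
      (((g⁻¹ : GL4) : Matrix (Fin 4) (Fin 4) ℂ) p i *
       ((g⁻¹ : GL4) : Matrix (Fin 4) (Fin 4) ℂ) q j *
       ((g⁻¹ : GL4) : Matrix (Fin 4) (Fin 4) ℂ) r k) • τ p q r)

/-- `(μ,τ)` degenerates to `(lam,sig)`: there is a curve `g : ℂ∖{0} → GL₄(ℂ)` with
`g(t)·μ → lam` and `g(t)·τ → sig` as `t → 0`. -/
def Degenerates (μ : Bil4) (τ : Tril4) (lam : Bil4) (sig : Tril4) : Prop :=
  ∃ g : ℂ → GL4,
    Tendsto (fun t => actBil (g t) μ) (𝓝[≠] (0 : ℂ)) (𝓝 lam) ∧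
    Tendsto (fun t => actTril (g t) τ) (𝓝[≠] (0 : ℂ)) (𝓝 sig)

noncomputable def μB10 : Bil4 := fun i j =>
  if i = (0 : Fin 4) ∧ j = (1 : Fin 4) then e4 2
  else if i = (1 : Fin 4) ∧ j = (0 : Fin 4) then -(e4 2)
  else if i = (0 : Fin 4) ∧ j = (2 : Fin 4) then e4 3
  else if i = (2 : Fin 4) ∧ j = (0 : Fin 4) then -(e4 3)
  else 0

noncomputable def τB10 : Tril4 := fun i j k =>
  if i = (0 : Fin 4) ∧ j = (1 : Fin 4) ∧ k = (0 : Fin 4) then e4 2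
  else if i = (1 : Fin 4) ∧ j = (0 : Fin 4) ∧ k = (0 : Fin 4) then -(e4 2)
  else if i = (0 : Fin 4) ∧ j = (1 : Fin 4) ∧ k = (2 : Fin 4) then e4 3
  else if i = (1 : Fin 4) ∧ j = (0 : Fin 4) ∧ k = (2 : Fin 4) then -(e4 3)
  else if i = (0 : Fin 4) ∧ j = (2 : Fin 4) ∧ k = (1 : Fin 4) then e4 3
  else if i = (2 : Fin 4) ∧ j = (0 : Fin 4) ∧ k = (1 : Fin 4) then -(e4 3)
  else 0

noncomputable def μB09 : Bil4 := fun i j =>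
  if i = (0 : Fin 4) ∧ j = (1 : Fin 4) then e4 2
  else if i = (1 : Fin 4) ∧ j = (0 : Fin 4) then -(e4 2)
  else 0

noncomputable def τB09 : Tril4 := fun i j k =>
  if i = (0 : Fin 4) ∧ j = (1 : Fin 4) ∧ k = (0 : Fin 4) then e4 2
  else if i = (1 : Fin 4) ∧ j = (0 : Fin 4) ∧ k = (0 : Fin 4) then -(e4 2)
  else if i = (0 : Fin 4) ∧ j = (1 : Fin 4) ∧ k = (2 : Fin 4) then e4 3
  else if i = (1 : Fin 4) ∧ j = (0 : Fin 4) ∧ k = (2 : Fin 4) then -(e4 3)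
  else if i = (0 : Fin 4) ∧ j = (2 : Fin 4) ∧ k = (1 : Fin 4) then e4 3
  else if i = (2 : Fin 4) ∧ j = (0 : Fin 4) ∧ k = (1 : Fin 4) then -(e4 3)
  else 0


noncomputable def dvec (t : ℂ) : Fin 4 → ℂ := ![1, t, t, t^2]
noncomputable def dinvvec (t : ℂ) : Fin 4 → ℂ := ![1, t⁻¹, t⁻¹, (t^2)⁻¹]

lemma dvec_mul_dinvvec {t : ℂ} (ht : t ≠ 0) : dvec t * dinvvec t = 1 := by
  funext i; fin_cases i <;> simp [dvec, dinvvec] <;> field_simp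

lemma dinvvec_mul_dvec {t : ℂ} (ht : t ≠ 0) : dinvvec t * dvec t = 1 := by
  rw [mul_comm]; exact dvec_mul_dinvvec ht

noncomputable def gcurve (t : ℂ) : GL4 :=
  if ht : t = 0 then 1 else
    ⟨Matrix.diagonal (dvec t), Matrix.diagonal (dinvvec t),
      by rw [Matrix.diagonal_mul_diagonal,
             show (fun i => dvec t i * dinvvec t i) = (1 : Fin 4 → ℂ) from dvec_mul_dinvvec ht]; exact Matrix.diagonal_one,
      by rw [Matrix.diagonal_mul_diagonal,
             show (fun i => dinvvec t i * dvec t i) = (1 : Fin 4 → ℂ) from dinvvec_mul_dvec ht]; exact Matrix.diagonal_one⟩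

lemma gcurve_val {t : ℂ} (ht : t ≠ 0) :
    (gcurve t : Matrix (Fin 4) (Fin 4) ℂ) = Matrix.diagonal (dvec t) := by
  simp [gcurve, ht]

lemma gcurve_inv_val {t : ℂ} (ht : t ≠ 0) :
    (((gcurve t)⁻¹ : GL4) : Matrix (Fin 4) (Fin 4) ℂ) = Matrix.diagonal (dinvvec t) := by
  simp [gcurve, ht, Units.inv_mk]

lemma collapse2 (w : Fin 4 → ℂ) (μ : Bil4) (i j : Fin 4) :
    (∑ p, ∑ q, ((Matrix.diagonal w) p i * (Matrix.diagonal w) q j) • μ p q)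
      = (w i * w j) • μ i j := by
  simp [Matrix.diagonal_apply, ite_mul, mul_ite, ite_smul]

lemma collapse3 (w : Fin 4 → ℂ) (τ : Tril4) (i j k : Fin 4) :
    (∑ p, ∑ q, ∑ r, ((Matrix.diagonal w) p i * (Matrix.diagonal w) q j *
      (Matrix.diagonal w) r k) • τ p q r) = (w i * w j * w k) • τ i j k := by
  simp [Matrix.diagonal_apply, ite_mul, mul_ite, ite_smul]

noncomputable def Ebil : Bil4 := fun i j =>
  if i = (0 : Fin 4) ∧ j = (2 : Fin 4) then e4 3
  else if i = (2 : Fin 4) ∧ j = (0 : Fin 4) then -(e4 3)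
  else 0

set_option maxHeartbeats 2000000 in
lemma actBil_eq {t : ℂ} (ht : t ≠ 0) :
    actBil (gcurve t) μB10 = μB09 + t • Ebil := by
  funext i j k
  rw [actBil, gcurve_val ht, gcurve_inv_val ht, collapse2]
  simp only [Matrix.mulVec_diagonal, Pi.smul_apply, smul_eq_mul]
  fin_cases i <;> fin_cases j <;> fin_cases k <;>
    simp [μB10, μB09, Ebil, e4, dvec, dinvvec, Pi.single_apply] <;> (try field_simp) <;> (try ring)

set_option maxHeartbeats 4000000 in
lemma actTril_eq {t : ℂ} (ht : t ≠ 0) :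
    actTril (gcurve t) τB10 = τB09 := by
  funext i j k l
  rw [actTril, gcurve_val ht, gcurve_inv_val ht, collapse3]
  simp only [Matrix.mulVec_diagonal, Pi.smul_apply, smul_eq_mul]
  fin_cases i <;> fin_cases j <;> fin_cases k <;> fin_cases l <;>
    simp [τB10, τB09, e4, dvec, dinvvec, Pi.single_apply] <;> (try field_simp) <;> (try ring)

/-- 𝔅₁₀ degenerates to 𝔅₀₉. -/
theorem stmt14 : Degenerates μB10 τB10 μB09 τB09 := by
  refine ⟨gcurve, ?_, ?_⟩
  · have h1 : Tendsto (fun t : ℂ => μB09 + t • Ebil) (𝓝[≠] (0 : ℂ)) (𝓝 μB09) := by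
      have : Continuous (fun t : ℂ => μB09 + t • Ebil) := by
        exact continuous_const.add (continuous_id.smul continuous_const)
      have h2 : Tendsto (fun t : ℂ => μB09 + t • Ebil) (𝓝 (0 : ℂ))
          (𝓝 (μB09 + (0 : ℂ) • Ebil)) := this.tendsto 0
      simpa using h2.mono_left nhdsWithin_le_nhds
    refine h1.congr' ?_
    filter_upwards [self_mem_nhdsWithin] with t ht
    exact (actBil_eq ht).symm
  · refine tendsto_const_nhds.congr' ?_
    filter_upwards [self_mem_nhdsWithin] with t ht
    exact (actTril_eq ht).symm
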